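/- If k is even and k ≥ 4, then C_k[nK_1] admits an interval coloring with W(C_k[nK_1]) ≥ 2n + nk/2 − 1. -/

import Mathlib

open SimpleGraph

/-- `c` is an interval `t`-coloring of `G`: edges get colors in `{1,…,t}`, every color
`1,…,t` is used, adjacent edges get distinct colors, and the set of colors of edges
incident to any vertex is an interval of integers. -/
def IsIntervalColoring {V : Type*} (G : SimpleGraph V) (t : ℕ) (c : Sym2 V → ℕ) : Prop :=
  (∀ e ∈ G.edgeSet, 1 ≤ c e ∧ c e ≤ t) ∧
  (∀ i, 1 ≤ i → i ≤ t → ∃ e ∈ G.edgeSet, c e = i) ∧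
  (∀ v w₁ w₂, G.Adj v w₁ → G.Adj v w₂ → w₁ ≠ w₂ → c s(v, w₁) ≠ c s(v, w₂)) ∧
  (∀ v i j k, (∃ w, G.Adj v w ∧ c s(v, w) = i) → (∃ w, G.Adj v w ∧ c s(v, w) = k) →
    i ≤ j → j ≤ k → ∃ w, G.Adj v w ∧ c s(v, w) = j)

/-- `G` has an interval `t`-coloring. -/
def HasIntervalColoring {V : Type*} (G : SimpleGraph V) (t : ℕ) : Prop :=
  ∃ c : Sym2 V → ℕ, IsIntervalColoring G t c

/-- `G` is interval colorable (`G ∈ 𝔑`). -/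
def IntervalColorable {V : Type*} (G : SimpleGraph V) : Prop :=
  ∃ t : ℕ, 1 ≤ t ∧ HasIntervalColoring G t

/-- `w G`: the least number of colors in an interval coloring of `G`. -/
noncomputable def wNum {V : Type*} (G : SimpleGraph V) : ℕ :=
  sInf {t | HasIntervalColoring G t}

/-- `W G`: the greatest number of colors in an interval coloring of `G`. -/
noncomputable def WNum {V : Type*} (G : SimpleGraph V) : ℕ :=
  sSup {t | HasIntervalColoring G t}

/-- `G` is `r`-regular: every vertex has exactly `r` neighbors. -/
def IsRegularGraph {V : Type*} (G : SimpleGraph V) (r : ℕ) : Prop :=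
  ∀ v : V, (G.neighborSet v).ncard = r

/-- `c` is a proper edge coloring of `G` using colors `0,…,k-1`. -/
def IsProperEdgeColoring {V : Type*} (G : SimpleGraph V) (k : ℕ) (c : Sym2 V → ℕ) : Prop :=
  (∀ e ∈ G.edgeSet, c e < k) ∧
  (∀ v w₁ w₂, G.Adj v w₁ → G.Adj v w₂ → w₁ ≠ w₂ → c s(v, w₁) ≠ c s(v, w₂))

/-- The chromatic index `χ'(G)`. -/
noncomputable def edgeChromaticNumber {V : Type*} (G : SimpleGraph V) : ℕ :=
  sInf {k | ∃ c : Sym2 V → ℕ, IsProperEdgeColoring G k c}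

/-- `G` is 1-factorable: its edge set decomposes into perfect matchings. -/
def IsOneFactorable {V : Type*} (G : SimpleGraph V) : Prop :=
  ∃ (n : ℕ) (f : Fin n → SimpleGraph.Subgraph G),
    (∀ i, (f i).IsPerfectMatching) ∧
    (∀ e ∈ G.edgeSet, ∃! i, e ∈ (f i).edgeSet)

/-- The tensor (direct) product `G × H`. -/
def tensorProd {α β : Type*} (G : SimpleGraph α) (H : SimpleGraph β) :
    SimpleGraph (α × β) where
  Adj p q := G.Adj p.1 q.1 ∧ H.Adj p.2 q.2
  symm := Std.Symm.mk fun p q ⟨h₁, h₂⟩ => ⟨h₁.symm, h₂.symm⟩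
  loopless := Std.Irrefl.mk fun p h => G.loopless.irrefl p.1 h.1

/-- The strong tensor (semistrong) product `G ⊗ H`. -/
def strongTensorProd {α β : Type*} (G : SimpleGraph α) (H : SimpleGraph β) :
    SimpleGraph (α × β) where
  Adj p q := (G.Adj p.1 q.1 ∧ H.Adj p.2 q.2) ∨ (p.2 = q.2 ∧ G.Adj p.1 q.1)
  symm := Std.Symm.mk fun p q h => by
    rcases h with ⟨h₁, h₂⟩ | ⟨h₁, h₂⟩
    · exact Or.inl ⟨h₁.symm, h₂.symm⟩
    · exact Or.inr ⟨h₁.symm, h₂.symm⟩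
  loopless := Std.Irrefl.mk fun p h => by
    rcases h with ⟨h₁, _⟩ | ⟨_, h₁⟩ <;> exact G.loopless.irrefl p.1 h₁

/-- The strong product `G ⊠ H`. -/
def strongProd {α β : Type*} (G : SimpleGraph α) (H : SimpleGraph β) :
    SimpleGraph (α × β) where
  Adj p q := (G.Adj p.1 q.1 ∧ H.Adj p.2 q.2) ∨ (p.1 = q.1 ∧ H.Adj p.2 q.2) ∨
    (p.2 = q.2 ∧ G.Adj p.1 q.1)
  symm := Std.Symm.mk fun p q h => by
    rcases h with ⟨h₁, h₂⟩ | ⟨h₁, h₂⟩ | ⟨h₁, h₂⟩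
    · exact Or.inl ⟨h₁.symm, h₂.symm⟩
    · exact Or.inr (Or.inl ⟨h₁.symm, h₂.symm⟩)
    · exact Or.inr (Or.inr ⟨h₁.symm, h₂.symm⟩)
  loopless := Std.Irrefl.mk fun p h => by
    rcases h with ⟨h₁, _⟩ | ⟨_, h₂⟩ | ⟨_, h₁⟩
    · exact G.loopless.irrefl p.1 h₁
    · exact H.loopless.irrefl p.2 h₂
    · exact G.loopless.irrefl p.1 h₁

/-- The lexicographic product (composition) `G[H]`. -/
def lexProd {α β : Type*} (G : SimpleGraph α) (H : SimpleGraph β) :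
    SimpleGraph (α × β) where
  Adj p q := G.Adj p.1 q.1 ∨ (p.1 = q.1 ∧ H.Adj p.2 q.2)
  symm := Std.Symm.mk fun p q h => by
    rcases h with h₁ | ⟨h₁, h₂⟩
    · exact Or.inl h₁.symm
    · exact Or.inr ⟨h₁.symm, h₂.symm⟩
  loopless := Std.Irrefl.mk fun p h => by
    rcases h with h₁ | ⟨_, h₂⟩
    · exact G.loopless.irrefl p.1 h₁
    · exact H.loopless.irrefl p.2 h₂

/-!
Colour the edge `s(i, i + 1)` of the even cycle `C_k` by one more than the distance of `i` from
`0`. Walking around the cycle this distance goes up and down by exactly one, so the two colours at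
every vertex are consecutive and `C_k` gets an interval colouring with `k / 2 + 1` colours.

Any interval `t`-colouring `c` of `G` blows up to `G[nK₁]`: give the edge between `(x, a)` and
`(y, b)` the colour `n (c(xy) - 1) + a + b + 1`. At `(x, a)` the offsets `n (c(xy) - 1) + b` run
through `n`-blocks indexed by the consecutive colours `c(xy)`, so they fill an interval without
repetition, and altogether the colours `1, …, n t + n - 1` are used. For `t = k / 2 + 1` this
is `2n + nk/2 - 1` colours.
-/

section IntervalColoring

variable {V : Type*} {G : SimpleGraph V} {t : ℕ} {c : Sym2 V → ℕ}

theorem IsIntervalColoring.of_consecutive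
    (hbound : ∀ e ∈ G.edgeSet, 1 ≤ c e ∧ c e ≤ t)
    (hsurj : ∀ i, 1 ≤ i → i ≤ t → ∃ e ∈ G.edgeSet, c e = i)
    (hconsec : ∀ v w₁ w₂, G.Adj v w₁ → G.Adj v w₂ → w₁ ≠ w₂ →
      c s(v, w₁) + 1 = c s(v, w₂) ∨ c s(v, w₂) + 1 = c s(v, w₁)) :
    IsIntervalColoring G t c := by
  refine ⟨hbound, hsurj, fun v w₁ w₂ h₁ h₂ hne => ?_, ?_⟩
  · have := hconsec v w₁ w₂ h₁ h₂ hne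
    omega
  · rintro v - j - ⟨w₁, h₁, rfl⟩ ⟨w₂, h₂, rfl⟩ hlo hhi
    by_cases hw : w₁ = w₂
    · subst hw
      exact ⟨w₁, h₁, by omega⟩
    · have := hconsec v w₁ w₂ h₁ h₂ hw
      obtain rfl | rfl : j = c s(v, w₁) ∨ j = c s(v, w₂) := by omega
      exacts [⟨w₁, h₁, rfl⟩, ⟨w₂, h₂, rfl⟩]

theorem HasIntervalColoring.le_WNum [Finite V] (h : HasIntervalColoring G t) : t ≤ WNum G := by
  classical
  have := Fintype.ofFinite V
  refine le_csSup ⟨Fintype.card (Sym2 V), ?_⟩ h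
  rintro s ⟨c, -, hsurj, -, -⟩
  calc s = (Finset.Icc 1 s).card := by simp
    _ ≤ (Finset.univ.image c).card := Finset.card_le_card fun i hi => by
        obtain ⟨e, -, rfl⟩ := hsurj i (Finset.mem_Icc.1 hi).1 (Finset.mem_Icc.1 hi).2
        exact Finset.mem_image_of_mem c (Finset.mem_univ e)
    _ ≤ Fintype.card (Sym2 V) := Finset.card_image_le

end IntervalColoring

section EvenCycle

def cycleDistZero {k : ℕ} (i : Fin k) : ℕ := min i.val (k - i.val)

theorem cycleDistZero_le {k : ℕ} (i : Fin k) : cycleDistZero i ≤ k / 2 := by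
  unfold cycleDistZero
  omega

theorem cycleDistZero_add_one {n : ℕ} (hn : Even (n + 1)) (i : Fin (n + 1)) :
    cycleDistZero (i + 1) = cycleDistZero i + 1 ∨
      cycleDistZero i = cycleDistZero (i + 1) + 1 := by
  obtain ⟨m, hm⟩ := hn
  unfold cycleDistZero
  rw [Fin.val_add_one]
  have := i.isLt
  split_ifs with h
  · subst h
    simp only [Fin.val_last]
    omega
  · have : i.val ≠ n := fun h' => h (Fin.ext h')
    omega

/-- The edge `s(i, i + 1)` with `i + 1 < k` gets colour `cycleDistZero i + 1`; the only other edge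
is `s(0, k - 1)`, and `cycleDistZero (k - 1) + 1 = 2`. -/
def evenCycleColoring {k : ℕ} (e : Sym2 (Fin k)) : ℕ :=
  if (e.sup : ℕ) = e.inf + 1 then cycleDistZero e.inf + 1 else 2

theorem evenCycleColoring_mk_add_one {n : ℕ} (i : Fin (n + 3)) :
    evenCycleColoring s(i, i + 1) = cycleDistZero i + 1 := by
  unfold evenCycleColoring
  by_cases h : i = Fin.last (n + 2)
  · subst h
    simp [cycleDistZero]
  · have hval : ((i + 1 : Fin (n + 3)) : ℕ) = i + 1 := by
      rw [Fin.val_add_one, if_neg h]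
    have hlt : i ≤ i + 1 := Fin.le_iff_val_le_val.2 (by omega)
    simp [hval, hlt]

theorem cycleGraph_adj_iff_eq_add_one {n : ℕ} {u v : Fin (n + 2)} :
    (cycleGraph (n + 2)).Adj u v ↔ v = u + 1 ∨ u = v + 1 := by
  rw [cycleGraph_adj, sub_eq_iff_eq_add', sub_eq_iff_eq_add', or_comm]

theorem hasIntervalColoring_cycleGraph_of_even {k : ℕ} (hk : Even k) (hk4 : 4 ≤ k) :
    HasIntervalColoring (cycleGraph k) (k / 2 + 1) := by
  obtain ⟨n, rfl⟩ : ∃ n, k = n + 3 := ⟨k - 3, by omega⟩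
  refine ⟨evenCycleColoring, IsIntervalColoring.of_consecutive ?_ ?_ ?_⟩
  · refine Sym2.ind fun u v he => ?_
    rcases cycleGraph_adj_iff_eq_add_one.1 ((cycleGraph _).mem_edgeSet.1 he) with rfl | rfl
    · have := cycleDistZero_le u
      rw [evenCycleColoring_mk_add_one]
      omega
    · have := cycleDistZero_le v
      rw [Sym2.eq_swap, evenCycleColoring_mk_add_one]
      omega
  · intro j hj₁ hj₂
    let i : Fin (n + 3) := ⟨j - 1, by omega⟩
    refine ⟨s(i, i + 1), cycleGraph_adj_iff_eq_add_one.2 (Or.inl rfl), ?_⟩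
    rw [evenCycleColoring_mk_add_one]
    simp only [cycleDistZero, i]
    omega
  · have key : ∀ u : Fin (n + 3), evenCycleColoring s(u + 1, u) + 1 =
        evenCycleColoring s(u + 1, u + 1 + 1) ∨
        evenCycleColoring s(u + 1, u + 1 + 1) + 1 = evenCycleColoring s(u + 1, u) := by
      intro u
      rw [Sym2.eq_swap (a := u + 1) (b := u), evenCycleColoring_mk_add_one,
        evenCycleColoring_mk_add_one]
      have := cycleDistZero_add_one hk u
      omega
    intro v w₁ w₂ h₁ h₂ hne
    rcases cycleGraph_adj_iff_eq_add_one.1 h₁ with rfl | rfl <;>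
      rcases cycleGraph_adj_iff_eq_add_one.1 h₂ with h | h
    · exact absurd h.symm hne
    · subst h
      exact (key w₂).symm
    · subst h
      exact key w₁
    · exact absurd (add_right_cancel h) hne

end EvenCycle

section LexProdBot

variable {V : Type*} {G : SimpleGraph V} {t n : ℕ} {c : Sym2 V → ℕ}

@[simp]
theorem lexProd_bot_adj {β : Type*} {p q : V × β} :
    (lexProd G (⊥ : SimpleGraph β)).Adj p q ↔ G.Adj p.1 q.1 := by
  simp [lexProd]

theorem exists_fin_add_eq {s : ℕ} (hs : s + 1 < 2 * n) : ∃ a b : Fin n, (a : ℕ) + b = s :=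
  ⟨⟨min s (n - 1), by omega⟩, ⟨s - min s (n - 1), by omega⟩, by simp only; omega⟩

theorem exists_mul_le_lt_mul_add (ht : 1 ≤ t) {z : ℕ} (hz : z + 1 < n * t + n) :
    ∃ g < t, n * g ≤ z ∧ z + 1 < n * g + 2 * n := by
  have hn : 0 < n := Nat.pos_of_ne_zero (by rintro rfl; simp at hz)
  by_cases h : z < n * t
  · refine ⟨z / n, (Nat.div_lt_iff_lt_mul hn).2 (by linarith), Nat.mul_div_le z n, ?_⟩
    have := Nat.lt_mul_div_succ z hn
    linarith
  · have := Nat.mul_sub_one n t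
    have := Nat.le_mul_of_pos_right n ht
    exact ⟨t - 1, by omega, by omega, by omega⟩

theorem mul_add_div_eq_of_lt {x b : ℕ} (hb : b < n) : (n * x + b) / n = x := by
  rw [Nat.mul_add_div (by omega), Nat.div_eq_of_lt hb, add_zero]

def lexBotColoring (c : Sym2 V → ℕ) (n : ℕ) : Sym2 (V × Fin n) → ℕ :=
  Sym2.lift ⟨fun p q => n * (c s(p.1, q.1) - 1) + p.2 + q.2 + 1, fun p q => by
    dsimp only
    rw [Sym2.eq_swap]
    omega⟩

theorem lexBotColoring_mk (p q : V × Fin n) :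
    lexBotColoring c n s(p, q) = n * (c s(p.1, q.1) - 1) + p.2 + q.2 + 1 := rfl

theorem lexBotColoring_le (hbound : ∀ e ∈ G.edgeSet, 1 ≤ c e ∧ c e ≤ t) (ht : 1 ≤ t) :
    ∀ e ∈ (lexProd G (⊥ : SimpleGraph (Fin n))).edgeSet,
      1 ≤ lexBotColoring c n e ∧ lexBotColoring c n e ≤ n * t + n - 1 := by
  refine Sym2.ind fun p q he => ?_
  have hc := hbound s(p.1, q.1) (lexProd_bot_adj.1 he)
  have : n * (c s(p.1, q.1) - 1) ≤ n * (t - 1) := Nat.mul_le_mul_left n (by omega)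
  have := Nat.mul_sub_one n t
  have := Nat.le_mul_of_pos_right n ht
  have := p.2.isLt
  have := q.2.isLt
  rw [lexBotColoring_mk]
  omega

theorem lexBotColoring_surjective (hsurj : ∀ i, 1 ≤ i → i ≤ t → ∃ e ∈ G.edgeSet, c e = i)
    (ht : 1 ≤ t) :
    ∀ i, 1 ≤ i → i ≤ n * t + n - 1 →
      ∃ e ∈ (lexProd G (⊥ : SimpleGraph (Fin n))).edgeSet, lexBotColoring c n e = i := by
  intro i hi₁ hi₂
  obtain ⟨g, hg, hlo, hhi⟩ := exists_mul_le_lt_mul_add (n := n) ht (z := i - 1) (by omega)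
  obtain ⟨a, b, hab⟩ := exists_fin_add_eq (n := n) (s := i - 1 - n * g) (by omega)
  obtain ⟨e, he, hce⟩ := hsurj (g + 1) (by omega) (by omega)
  induction e using Sym2.ind with | _ x y => ?_
  refine ⟨s((x, a), (y, b)), lexProd_bot_adj.2 he, ?_⟩
  rw [lexBotColoring_mk]
  simp only [hce, Nat.add_sub_cancel]
  omega

theorem lexBotColoring_proper (hbound : ∀ e ∈ G.edgeSet, 1 ≤ c e ∧ c e ≤ t)
    (hproper : ∀ v w₁ w₂, G.Adj v w₁ → G.Adj v w₂ → w₁ ≠ w₂ → c s(v, w₁) ≠ c s(v, w₂)) :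
    ∀ v w₁ w₂, (lexProd G (⊥ : SimpleGraph (Fin n))).Adj v w₁ →
      (lexProd G (⊥ : SimpleGraph (Fin n))).Adj v w₂ → w₁ ≠ w₂ →
        lexBotColoring c n s(v, w₁) ≠ lexBotColoring c n s(v, w₂) := by
  rintro ⟨x, a⟩ ⟨y₁, b₁⟩ ⟨y₂, b₂⟩ h₁ h₂ hne heq
  simp only [lexProd_bot_adj] at h₁ h₂
  simp only [lexBotColoring_mk] at heq
  have heq' : n * (c s(x, y₁) - 1) + b₁ = n * (c s(x, y₂) - 1) + b₂ := by omega
  have hdiv := congrArg (· / n) heq'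
  have hmod := congrArg (· % n) heq'
  simp only [mul_add_div_eq_of_lt b₁.isLt, mul_add_div_eq_of_lt b₂.isLt,
    Nat.mul_add_mod, Nat.mod_eq_of_lt b₁.isLt, Nat.mod_eq_of_lt b₂.isLt] at hdiv hmod
  have hc₁ := (hbound s(x, y₁) h₁).1
  have hc₂ := (hbound s(x, y₂) h₂).1
  have hy : y₁ = y₂ := by
    by_contra hy
    exact hproper x y₁ y₂ h₁ h₂ hy (by omega)
  exact hne (by rw [hy, Fin.ext hmod])

theorem lexBotColoring_interval (hbound : ∀ e ∈ G.edgeSet, 1 ≤ c e ∧ c e ≤ t)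
    (hinterval : ∀ v i j k, (∃ w, G.Adj v w ∧ c s(v, w) = i) →
      (∃ w, G.Adj v w ∧ c s(v, w) = k) → i ≤ j → j ≤ k → ∃ w, G.Adj v w ∧ c s(v, w) = j) :
    ∀ v i j k, (∃ w, (lexProd G (⊥ : SimpleGraph (Fin n))).Adj v w ∧
        lexBotColoring c n s(v, w) = i) →
      (∃ w, (lexProd G (⊥ : SimpleGraph (Fin n))).Adj v w ∧ lexBotColoring c n s(v, w) = k) →
        i ≤ j → j ≤ k →
          ∃ w, (lexProd G (⊥ : SimpleGraph (Fin n))).Adj v w ∧ lexBotColoring c n s(v, w) = j := by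
  rintro ⟨x, a⟩ - j - ⟨⟨y₁, b₁⟩, h₁, rfl⟩ ⟨⟨y₂, b₂⟩, h₂, rfl⟩ hlo hhi
  simp only [lexProd_bot_adj] at h₁ h₂
  simp only [lexBotColoring_mk] at hlo hhi
  obtain ⟨z, rfl⟩ : ∃ z, j = z + a + 1 := ⟨j - a - 1, by omega⟩
  have hlo' : c s(x, y₁) - 1 ≤ z / n := by
    have := Nat.div_le_div_right (c := n) (show n * (c s(x, y₁) - 1) + b₁ ≤ z by omega)
    rwa [mul_add_div_eq_of_lt b₁.isLt] at this
  have hhi' : z / n ≤ c s(x, y₂) - 1 := by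
    have := Nat.div_le_div_right (c := n) (show z ≤ n * (c s(x, y₂) - 1) + b₂ by omega)
    rwa [mul_add_div_eq_of_lt b₂.isLt] at this
  have hc₂ := (hbound s(x, y₂) h₂).1
  obtain ⟨y, hy, hcy⟩ :=
    hinterval x _ (z / n + 1) _ ⟨y₁, h₁, rfl⟩ ⟨y₂, h₂, rfl⟩ (by omega) (by omega)
  refine ⟨(y, ⟨z % n, Nat.mod_lt _ (by omega)⟩), lexProd_bot_adj.2 hy, ?_⟩
  rw [lexBotColoring_mk]
  simp only [hcy, Nat.add_sub_cancel]
  have := Nat.div_add_mod z n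
  omega

theorem HasIntervalColoring.lexProd_bot (h : HasIntervalColoring G t) (ht : 1 ≤ t) :
    HasIntervalColoring (lexProd G (⊥ : SimpleGraph (Fin n))) (n * t + n - 1) :=
  let ⟨c, hbound, hsurj, hproper, hinterval⟩ := h
  ⟨lexBotColoring c n, lexBotColoring_le hbound ht, lexBotColoring_surjective hsurj ht,
    lexBotColoring_proper hbound hproper, lexBotColoring_interval hbound hinterval⟩

end LexProdBot

/-- If `k` is even, `k ≥ 4`, then `C_k[nK₁] ∈ 𝔑` and `W(C_k[nK₁]) ≥ 2n + nk/2 - 1`. -/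
theorem cycle_lex_empty_interval_colorable (k n : ℕ) (hk : Even k) (hk4 : 4 ≤ k)
    (hn : 1 ≤ n) :
    IntervalColorable (lexProd (SimpleGraph.cycleGraph k) (⊥ : SimpleGraph (Fin n))) ∧
    WNum (lexProd (SimpleGraph.cycleGraph k) (⊥ : SimpleGraph (Fin n))) ≥
      2 * n + n * k / 2 - 1 := by
  have hcol := (hasIntervalColoring_cycleGraph_of_even hk hk4).lexProd_bot (n := n) (by omega)
  have hcount : n * (k / 2 + 1) + n - 1 = 2 * n + n * k / 2 - 1 := by
    rw [Nat.mul_div_assoc n (even_iff_two_dvd.1 hk), Nat.mul_succ]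
    omega
  rw [hcount] at hcol
  exact ⟨⟨_, by omega, hcol⟩, hcol.le_WNum⟩
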